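/- A Borel subset B of the Baire space ω^ω belongs to the tree ideal s₀ if and only if B is countable. -/

import Mathlib

/-!
Both directions rest on the perfect set theorem for Borel sets: an uncountable Borel set `K`
contains a nonempty compact perfect set `C`, and the tree of initial segments of `C` is a Sacks
tree with body `C ⊆ K`. Hence an uncountable Borel set contains the body of a Sacks tree, and no
Sacks subtree of it can avoid the set. Conversely, the body `[P]` of a Sacks tree is a nonempty
perfect set, hence uncountable; for countable `B` the Borel set `[P] \ B` is still uncountable, and
the Sacks tree it contains lies inside `P` and avoids `B`.
-/

open Cardinal Set MeasureTheory

/-- A tree on ω: a nonempty set of finite sequences closed under initial segments. -/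
def IsTree (T : Set (List ℕ)) : Prop :=
  T.Nonempty ∧ ∀ s ∈ T, ∀ n : ℕ, s.take n ∈ T

/-- The body of a tree: all infinite branches. -/
def treeBody (T : Set (List ℕ)) : Set (ℕ → ℕ) :=
  {x | ∀ n : ℕ, (List.ofFn fun i : Fin n => x i) ∈ T}

/-- Immediate successors of a node in a tree. -/
def succs (T : Set (List ℕ)) (t : List ℕ) : Set ℕ := {n | t ++ [n] ∈ T}

/-- Sacks (perfect) tree: every node has an extension with at least two immediate successors. -/
def IsSacksTree (T : Set (List ℕ)) : Prop :=
  IsTree T ∧ ∀ s ∈ T, ∃ t ∈ T, s <+: t ∧ (succs T t).Nontrivial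

/-- Miller tree: every node has an extension with infinitely many immediate successors. -/
def IsMillerTree (T : Set (List ℕ)) : Prop :=
  IsTree T ∧ ∀ s ∈ T, ∃ t ∈ T, s <+: t ∧ (succs T t).Infinite

/-- Laver tree: has a stem (a node comparable with every node) such that every node
extending the stem has infinitely many immediate successors. -/
def IsLaverTree (T : Set (List ℕ)) : Prop :=
  IsTree T ∧ ∃ s ∈ T, (∀ t ∈ T, s <+: t ∨ t <+: s) ∧
    ∀ t ∈ T, s <+: t → (succs T t).Infinite

/-- Complete Laver tree: every node has infinitely many immediate successors. -/
def IsCompleteLaverTree (T : Set (List ℕ)) : Prop :=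
  IsTree T ∧ ∀ t ∈ T, (succs T t).Infinite

/-- The tree ideal t₀ associated with a family of trees 𝕋. -/
def treeIdeal (𝕋 : Set (Set (List ℕ))) : Set (Set (ℕ → ℕ)) :=
  {A | ∀ P ∈ 𝕋, ∃ Q ∈ 𝕋, Q ⊆ P ∧ treeBody Q ∩ A = ∅}

/-- t-measurability with respect to a family of trees 𝕋. -/
def TMeasurable (𝕋 : Set (Set (List ℕ))) (A : Set (ℕ → ℕ)) : Prop :=
  ∀ P ∈ 𝕋, ∃ Q ∈ 𝕋, Q ⊆ P ∧ (treeBody Q ⊆ A ∨ treeBody Q ∩ A = ∅)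

/-- 𝕋-Bernstein set: meets and omits the body of every tree in 𝕋. -/
def TBernstein (𝕋 : Set (Set (List ℕ))) (B : Set (ℕ → ℕ)) : Prop :=
  ∀ T ∈ 𝕋, (B ∩ treeBody T).Nonempty ∧ (B \ treeBody T).Nonempty


open Topology Function PiNat

local notation:max x:max " ↾ " n:max => List.ofFn fun i : Fin n => x i

section PerfectSets

theorem PiNat.exists_cylinder_subset {E : ℕ → Type*} [∀ n, TopologicalSpace (E n)]
    [∀ n, DiscreteTopology (E n)] {x : ∀ n, E n} {U : Set (∀ n, E n)} (hU : U ∈ 𝓝 x) :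
    ∃ n, cylinder x n ⊆ U := by
  obtain ⟨_, ⟨y, n, rfl⟩, hx, hsub⟩ := (isTopologicalBasis_cylinders E).mem_nhds_iff.1 hU
  exact ⟨n, mem_cylinder_iff_eq.1 hx ▸ hsub⟩

instance PiNat.perfectSpace {E : ℕ → Type*} [∀ n, TopologicalSpace (E n)]
    [∀ n, DiscreteTopology (E n)] [∀ n, Nontrivial (E n)] : PerfectSpace (∀ n, E n) where
  univ_preperfect := preperfect_iff_nhds.2 fun x _ U hU => by
    obtain ⟨n, hn⟩ := exists_cylinder_subset hU
    obtain ⟨a, ha⟩ := exists_ne (x n)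
    exact ⟨update x n a, ⟨hn (update_mem_cylinder x n a), trivial⟩,
      fun h => ha (by simpa using congrFun h n)⟩

theorem preperfect_range_of_continuous_injective {X Y : Type*} [TopologicalSpace X]
    [PerfectSpace X] [TopologicalSpace Y] {f : X → Y} (hf : Continuous f) (hinj : Injective f) :
    Preperfect (range f) := by
  rintro _ ⟨z, rfl⟩
  rw [accPt_iff_nhds]
  intro U hU
  obtain ⟨z', ⟨hz'U, -⟩, hz'z⟩ :=
    preperfect_iff_nhds.1 PerfectSpace.univ_preperfect z trivial _ (hf.continuousAt hU)
  exact ⟨f z', ⟨hz'U, z', rfl⟩, hinj.ne hz'z⟩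

variable {α : Type*} [TopologicalSpace α] [PolishSpace α]

theorem Perfect.not_countable {C : Set α} (hC : Perfect C) (hne : C.Nonempty) :
    ¬C.Countable := by
  let := TopologicalSpace.upgradeIsCompletelyMetrizable α
  obtain ⟨f, hfC, -, hinj⟩ := hC.exists_nat_bool_injection hne
  intro hcount
  have : Countable (range f) := (hcount.mono hfC).to_subtype
  have : Countable (ℕ → Bool) := (Equiv.ofInjective f hinj).injective.countable
  rw [← Cardinal.mk_le_aleph0_iff] at this
  exact (Cardinal.aleph0_lt_continuum.trans_eq (by simp)).not_ge this

theorem MeasurableSet.exists_perfect_nonempty_subset_of_not_countable [MeasurableSpace α]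
    [BorelSpace α] {K : Set α} (hK : MeasurableSet K) (hunc : ¬K.Countable) :
    ∃ C ⊆ K, Perfect C ∧ C.Nonempty := by
  obtain ⟨f, hfK, hf, hinj⟩ :
      ∃ f : (ℕ → Bool) → α, range f ⊆ K ∧ Continuous f ∧ Injective f := by
    obtain ⟨t, ht, ht_polish, hK_closed, -⟩ := hK.isClopenable
    obtain ⟨f, hfK, hf, hinj⟩ :=
      @IsClosed.exists_nat_bool_injection_of_not_countable α t ht_polish K hK_closed hunc
    exact ⟨f, hfK, continuous_le_rng ht hf, hinj⟩
  exact ⟨range f, hfK, ⟨(isCompact_range hf).isClosed,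
    preperfect_range_of_continuous_injective hf hinj⟩, range_nonempty f⟩

end PerfectSets

theorem ofFn_eq_ofFn_iff_mem_cylinder {x y : ℕ → ℕ} {n : ℕ} :
    x ↾ n = y ↾ n ↔ y ∈ cylinder x n := by
  simp [List.ofFn_inj, funext_iff, Fin.forall_iff, eq_comm]

theorem ofFn_append_singleton (x : ℕ → ℕ) (n : ℕ) : x ↾ n ++ [x n] = x ↾ (n + 1) := by
  rw [List.ofFn_succ', List.concat_eq_append]
  rfl

theorem ofFn_prefix_ofFn (x : ℕ → ℕ) {m n : ℕ} (h : m ≤ n) : x ↾ m <+: x ↾ n := by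
  rw [List.prefix_iff_eq_take]
  apply List.ext_getElem <;> simp [h]

theorem mem_cylinder_of_ofFn_prefix {x y : ℕ → ℕ} {m n : ℕ} (h : x ↾ n <+: y ↾ m) :
    y ∈ cylinder x n := by
  have hnm : n ≤ m := by simpa using h.length_le
  refine ofFn_eq_ofFn_iff_mem_cylinder.1 (List.IsPrefix.eq_of_length ?_ (by simp))
  exact List.prefix_of_prefix_length_le h (ofFn_prefix_ofFn y hnm) (by simp)

theorem exists_ofFn_eq_of_chain {L : ℕ → List ℕ} (hL : ∀ k, L k <+: L (k + 1))
    (hlen : ∀ k, k ≤ (L k).length) : ∃ y : ℕ → ℕ, ∀ k, y ↾ (L k).length = L k := by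
  have hmono : ∀ {j k}, j ≤ k → L j <+: L k := by
    intro j k hjk
    induction k, hjk using Nat.le_induction with
    | base => exact List.prefix_rfl
    | succ k _ ih => exact ih.trans (hL k)
  refine ⟨fun i => (L (i + 1)).getD i 0, fun k => List.ext_getElem (by simp) fun i hi hik => ?_⟩
  have hi : i < (L (i + 1)).length := Nat.lt_of_lt_of_le i.lt_succ_self (hlen _)
  simp only [List.getElem_ofFn]
  rw [List.getD_eq_getElem _ _ hi]
  -- compare both entries with those of the longer list `L (max k (i + 1))`
  exact ((hmono (le_max_right k (i + 1))).getElem hi).trans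
    ((hmono (le_max_left k (i + 1))).getElem hik).symm

theorem treeBody_mono {Q P : Set (List ℕ)} (h : Q ⊆ P) : treeBody Q ⊆ treeBody P :=
  fun _ hx n => h (hx n)

theorem isClosed_treeBody (T : Set (List ℕ)) : IsClosed (treeBody T) := by
  rw [← isOpen_compl_iff, isOpen_iff_mem_nhds]
  intro x hx
  obtain ⟨n, hn⟩ : ∃ n, x ↾ n ∉ T := by simpa [treeBody] using hx
  filter_upwards [(isOpen_cylinder _ x n).mem_nhds (self_mem_cylinder x n)] with y hy hyT
  exact hn (ofFn_eq_ofFn_iff_mem_cylinder.2 hy ▸ hyT n)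

theorem IsTree.mem_of_prefix {T : Set (List ℕ)} (hT : IsTree T) {s t : List ℕ} (ht : t ∈ T)
    (h : s <+: t) : s ∈ T :=
  List.prefix_iff_eq_take.1 h ▸ hT.2 t ht s.length

def prefixTree (K : Set (ℕ → ℕ)) : Set (List ℕ) :=
  {l | ∃ y ∈ K, ∃ n, y ↾ n = l}

section PrefixTree

variable {K : Set (ℕ → ℕ)}

theorem ofFn_mem_prefixTree {y : ℕ → ℕ} (hy : y ∈ K) (n : ℕ) : y ↾ n ∈ prefixTree K :=
  ⟨y, hy, n, rfl⟩

theorem prefixTree_mono {K' : Set (ℕ → ℕ)} (h : K ⊆ K') :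
    prefixTree K ⊆ prefixTree K' := by
  rintro _ ⟨y, hy, n, rfl⟩
  exact ofFn_mem_prefixTree (h hy) n

theorem prefixTree_treeBody_subset (T : Set (List ℕ)) : prefixTree (treeBody T) ⊆ T := by
  rintro _ ⟨y, hy, n, rfl⟩
  exact hy n

theorem isTree_prefixTree (hK : K.Nonempty) : IsTree (prefixTree K) := by
  obtain ⟨y, hy⟩ := hK
  refine ⟨⟨_, ofFn_mem_prefixTree hy 0⟩, ?_⟩
  rintro _ ⟨z, hz, n, rfl⟩ m
  convert ofFn_mem_prefixTree hz (min m n) using 1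
  apply List.ext_getElem <;> simp

theorem treeBody_prefixTree_subset (hK : IsClosed K) : treeBody (prefixTree K) ⊆ K := by
  intro x hx
  rw [← hK.closure_eq, mem_closure_iff_nhds]
  intro U hU
  obtain ⟨n, hn⟩ := exists_cylinder_subset hU
  obtain ⟨y, hy, m, hyx⟩ := hx n
  exact ⟨y, hn (mem_cylinder_of_ofFn_prefix ⟨[], by rw [List.append_nil, hyx]⟩), hy⟩

theorem isSacksTree_prefixTree (hne : K.Nonempty) (hK : Preperfect K) :
    IsSacksTree (prefixTree K) := by
  refine ⟨isTree_prefixTree hne, ?_⟩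
  rintro _ ⟨y, hy, n, rfl⟩
  obtain ⟨z, ⟨hzy, hz⟩, hne⟩ := preperfect_iff_nhds.1 hK y hy _
    ((isOpen_cylinder _ y n).mem_nhds (self_mem_cylinder y n))
  -- `y` and `z` branch apart at their first difference `d`, which lies beyond `n`
  set d := firstDiff z y
  have hyz : y ↾ d = z ↾ d := ofFn_eq_ofFn_iff_mem_cylinder.2 (mem_cylinder_firstDiff z y)
  refine ⟨y ↾ d, ofFn_mem_prefixTree hy d,
    ofFn_prefix_ofFn y ((mem_cylinder_iff_le_firstDiff hne n).1 hzy),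
    y d, ?_, z d, ?_, (apply_firstDiff_ne hne).symm⟩
  · show y ↾ d ++ [y d] ∈ prefixTree K
    rw [ofFn_append_singleton]
    exact ofFn_mem_prefixTree hy _
  · show y ↾ d ++ [z d] ∈ prefixTree K
    rw [hyz, ofFn_append_singleton]
    exact ofFn_mem_prefixTree hz _

end PrefixTree

namespace IsSacksTree

variable {T : Set (List ℕ)}

theorem exists_proper_extension (hT : IsSacksTree T) {s : List ℕ} (hs : s ∈ T) :
    ∃ t ∈ T, s <+: t ∧ s.length < t.length := by
  obtain ⟨t, -, hst, a, ha, -⟩ := hT.2 s hs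
  exact ⟨t ++ [a], ha, hst.trans (List.prefix_append t [a]), by simpa using hst.length_le⟩

theorem exists_extension_ne_ofFn (hT : IsSacksTree T) {s : List ℕ} (hs : s ∈ T)
    (x : ℕ → ℕ) : ∃ t ∈ T, s <+: t ∧ t ≠ x ↾ t.length := by
  obtain ⟨t, -, hst, a, ha, b, hb, hab⟩ := hT.2 s hs
  obtain ⟨c, hc, hcx⟩ : ∃ c ∈ succs T t, c ≠ x t.length := by
    by_cases hax : a = x t.length
    · exact ⟨b, hb, fun hbx => hab (hax.trans hbx.symm)⟩
    · exact ⟨a, ha, hax⟩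
  refine ⟨t ++ [c], hc, hst.trans (List.prefix_append t [c]), fun h => hcx ?_⟩
  rw [List.length_append, List.length_singleton, ← ofFn_append_singleton] at h
  simpa using (List.append_inj' h rfl).2

theorem exists_mem_treeBody (hT : IsSacksTree T) {s : List ℕ} (hs : s ∈ T) :
    ∃ y ∈ treeBody T, y ↾ s.length = s := by
  choose ext hext_mem hext_prefix hext_len using fun t : T => hT.exists_proper_extension t.2
  let nodes : ℕ → T := fun k => Nat.rec ⟨s, hs⟩ (fun _ t => ⟨ext t, hext_mem t⟩) k
  have hlen : ∀ k, k ≤ (nodes k).1.length := by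
    intro k
    induction k with
    | zero => exact Nat.zero_le _
    | succ k ih => exact Nat.succ_le_of_lt (ih.trans_lt (hext_len (nodes k)))
  obtain ⟨y, hy⟩ := exists_ofFn_eq_of_chain (L := fun k => (nodes k).1)
    (fun k => hext_prefix (nodes k)) hlen
  refine ⟨y, fun n => hT.1.mem_of_prefix (nodes n).2 ?_, hy 0⟩
  rw [← hy n]
  exact ofFn_prefix_ofFn y (hlen n)

theorem perfect_treeBody (hT : IsSacksTree T) : Perfect (treeBody T) := by
  refine ⟨isClosed_treeBody T, preperfect_iff_nhds.2 fun x hx U hU => ?_⟩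
  obtain ⟨n, hn⟩ := exists_cylinder_subset hU
  obtain ⟨t, ht, hxt, htx⟩ := hT.exists_extension_ne_ofFn (hx n) x
  obtain ⟨y, hy, hyt⟩ := hT.exists_mem_treeBody ht
  refine ⟨y, ⟨hn (mem_cylinder_of_ofFn_prefix (hyt ▸ hxt)), hy⟩, ?_⟩
  rintro rfl
  exact htx hyt.symm

theorem treeBody_nonempty (hT : IsSacksTree T) : (treeBody T).Nonempty :=
  let ⟨_, hs⟩ := hT.1.1
  let ⟨y, hy, _⟩ := hT.exists_mem_treeBody hs
  ⟨y, hy⟩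

theorem not_countable_treeBody (hT : IsSacksTree T) : ¬(treeBody T).Countable :=
  hT.perfect_treeBody.not_countable hT.treeBody_nonempty

end IsSacksTree

theorem exists_isSacksTree_subset_prefixTree {K : Set (ℕ → ℕ)} (hK : MeasurableSet K)
    (hunc : ¬K.Countable) : ∃ Q, IsSacksTree Q ∧ Q ⊆ prefixTree K ∧ treeBody Q ⊆ K := by
  obtain ⟨C, hCK, hC, hne⟩ := hK.exists_perfect_nonempty_subset_of_not_countable hunc
  exact ⟨prefixTree C, isSacksTree_prefixTree hne hC.acc, prefixTree_mono hCK,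
    (treeBody_prefixTree_subset hC.closed).trans hCK⟩

/-- a Borel set belongs to s₀ iff it is countable. -/
theorem stmt6 (B : Set (ℕ → ℕ)) (hB : MeasurableSet[borel (ℕ → ℕ)] B) :
    B ∈ treeIdeal {T | IsSacksTree T} ↔ B.Countable := by
  rw [← BorelSpace.measurable_eq] at hB
  constructor
  · intro hB_s0
    by_contra hunc
    obtain ⟨Q, hQ, -, hQB⟩ := exists_isSacksTree_subset_prefixTree hB hunc
    obtain ⟨Q', hQ', hQ'Q, hQ'B⟩ := hB_s0 Q hQ
    obtain ⟨x, hx⟩ := hQ'.treeBody_nonempty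
    exact hQ'B.subset ⟨hx, hQB (treeBody_mono hQ'Q hx)⟩
  · intro hcount P hP
    have hK : MeasurableSet (treeBody P \ B) :=
      (isClosed_treeBody P).measurableSet.diff hcount.measurableSet
    have hunc : ¬(treeBody P \ B).Countable := fun h =>
      hP.not_countable_treeBody ((h.union hcount).mono (by simp))
    obtain ⟨Q, hQ, hQP, hQB⟩ := exists_isSacksTree_subset_prefixTree hK hunc
    refine ⟨Q, hQ, hQP.trans ((prefixTree_mono sdiff_subset).trans
      (prefixTree_treeBody_subset P)), ?_⟩
    exact disjoint_iff_inter_eq_empty.1 (disjoint_sdiff_left.mono_left hQB)
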